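/- arXiv:2208.06829 — 4 statements merged into one kernel-verified Lean document; each statement's English description precedes it below -/
import Mathlib

section
/- Difference Proportion Theorem: in the monounary algebra (ℕ, S) with S the successor function, the analogical proportion a : b :: c : d holds if and only if (a : ℤ) − (b : ℤ) = (c : ℤ) − (d : ℤ). -/
/-- The set of justifications of a pair `(x, y)` in the monounary algebra `(A, S)`:
pairs `(k, ℓ)` such that `S^[k] o = x` and `S^[ℓ] o = y` for some `o`. -/
def Jus {A : Type*} (S : A → A) (x y : A) : Set (ℕ × ℕ) :=
  {p | ∃ o : A, S^[p.1] o = x ∧ S^[p.2] o = y}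

/-- The arrow proportion `x → y ∴ u → v` in the monounary algebra `(A, S)`. -/
def ArrowP {A : Type*} (S : A → A) (x y u v : A) : Prop :=
  (∀ p ∈ Jus S x y ∪ Jus S u v, p.1 = p.2) ∨
  ((Jus S x y ∩ Jus S u v).Nonempty ∧
    ∀ v' : A, Jus S x y ∩ Jus S u v ⊆ Jus S x y ∩ Jus S u v' →
      Jus S x y ∩ Jus S u v' ⊆ Jus S x y ∩ Jus S u v)

/-- The analogical proportion `a : b :: c : d` in the monounary algebra `(A, S)`. -/
def AP {A : Type*} (S : A → A) (a b c d : A) : Prop :=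
  ArrowP S a b c d ∧ ArrowP S b a d c ∧ ArrowP S c d a b ∧ ArrowP S d c b a


lemma jus_mem (k l x y : ℕ) :
    (k, l) ∈ Jus Nat.succ x y ↔ ∃ o : ℕ, o + k = x ∧ o + l = y := by
  simp [Jus, Nat.succ_iterate]

lemma arrow_iff (x y u v : ℕ) :
    ArrowP Nat.succ x y u v ↔ (y : ℤ) - x = (v : ℤ) - u := by
  constructor
  · rintro (h | ⟨⟨⟨k, l⟩, ⟨o, ho1, ho2⟩, ⟨o', ho1', ho2'⟩⟩, _⟩)
    · have h1 : x = y := h (x, y) (Or.inl ⟨0, by simp [Nat.succ_iterate]⟩)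
      have h2 : u = v := h (u, v) (Or.inr ⟨0, by simp [Nat.succ_iterate]⟩)
      simp_all
    · simp only [Nat.succ_iterate] at ho1 ho2 ho1' ho2'
      omega
  · intro h
    right
    constructor
    · rcases le_total x u with hxu | hux
      · exact ⟨(x, y), ⟨0, by simp [Nat.succ_iterate]⟩,
          ⟨u - x, by simp [Nat.succ_iterate]; omega⟩⟩
      · exact ⟨(u, v), ⟨x - u, by simp [Nat.succ_iterate]; omega⟩,
          ⟨0, by simp [Nat.succ_iterate]⟩⟩
    · intro v' hsub
      have hne : (Jus Nat.succ x y ∩ Jus Nat.succ u v).Nonempty := by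
        rcases le_total x u with hxu | hux
        · exact ⟨(x, y), ⟨0, by simp [Nat.succ_iterate]⟩,
            ⟨u - x, by simp [Nat.succ_iterate]; omega⟩⟩
        · exact ⟨(u, v), ⟨x - u, by simp [Nat.succ_iterate]; omega⟩,
            ⟨0, by simp [Nat.succ_iterate]⟩⟩
      obtain ⟨⟨k, l⟩, hmem⟩ := hne
      have hmem' := hsub hmem
      obtain ⟨_, o', ho1', ho2'⟩ := hmem
      obtain ⟨_, o'', ho1'', ho2''⟩ := hmem'
      simp only [Nat.succ_iterate] at ho1' ho2' ho1'' ho2''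
      have : v' = v := by omega
      rw [this]

theorem difference_proportion (a b c d : ℕ) :
    AP Nat.succ a b c d ↔ (a : ℤ) - (b : ℤ) = (c : ℤ) - (d : ℤ) := by
  simp only [AP, arrow_iff]
  omega
end

section
/- There is a monounary algebra in which central permutation fails for the analogical proportion relation: in the algebra A = {a, b, c, d} with S(a) = c, S(b) = b, S(c) = c, S(d) = d, the proportion a : b :: c : d holds but a : c :: b : d does not. -/
/-- The algebra {a, b, c, d} = {0, 1, 2, 3} with S(a) = c, S(b) = b, S(c) = c, S(d) = d. -/
def S12 : Fin 4 → Fin 4 := fun x => if x = 0 then 2 else x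

lemma S12_reach1 : ∀ k (o : Fin 4), S12^[k] o = 1 → o = 1 := by
  intro k
  induction k with
  | zero => intro o h; exact h
  | succ n ih =>
    intro o h
    rw [Function.iterate_succ_apply] at h
    have h2 : S12 o = 1 := ih _ h
    have key : ∀ z : Fin 4, S12 z = 1 → z = 1 := by decide
    exact key o h2

lemma S12_reach3 : ∀ k (o : Fin 4), S12^[k] o = 3 → o = 3 := by
  intro k
  induction k with
  | zero => intro o h; exact h
  | succ n ih =>
    intro o h
    rw [Function.iterate_succ_apply] at h
    have h2 : S12 o = 3 := ih _ h
    have key : ∀ z : Fin 4, S12 z = 3 → z = 3 := by decide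
    exact key o h2

lemma S12_reach0 : ∀ k (o : Fin 4), S12^[k] o = 0 → o = 0 ∧ k = 0 := by
  intro k
  cases k with
  | zero => intro o h; exact ⟨h, rfl⟩
  | succ n =>
    intro o h
    exfalso
    rw [Function.iterate_succ_apply'] at h
    have : ∀ z : Fin 4, S12 z ≠ 0 := by decide
    exact this _ h

lemma S12_fix1 : ∀ k, S12^[k] (1 : Fin 4) = 1 := fun k => Function.iterate_fixed rfl k
lemma S12_fix2 : ∀ k, S12^[k] (2 : Fin 4) = 2 := fun k => Function.iterate_fixed rfl k
lemma S12_fix3 : ∀ k, S12^[k] (3 : Fin 4) = 3 := fun k => Function.iterate_fixed rfl k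

lemma Jus01_empty : Jus S12 0 1 = ∅ := by
  ext p
  simp only [Jus, Set.mem_setOf_eq, Set.mem_empty_iff_false, iff_false, not_exists]
  rintro o ⟨h0, h1⟩
  obtain ⟨rfl, hk⟩ := S12_reach0 _ _ h0
  exact absurd (S12_reach1 _ _ h1) (by decide)

lemma Jus10_empty : Jus S12 1 0 = ∅ := by
  ext p
  simp only [Jus, Set.mem_setOf_eq, Set.mem_empty_iff_false, iff_false, not_exists]
  rintro o ⟨h1, h0⟩
  obtain ⟨rfl, hk⟩ := S12_reach0 _ _ h0
  exact absurd (S12_reach1 _ _ h1) (by decide)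

lemma Jus23_empty : Jus S12 2 3 = ∅ := by
  ext p
  simp only [Jus, Set.mem_setOf_eq, Set.mem_empty_iff_false, iff_false, not_exists]
  rintro o ⟨h2, h3⟩
  have := S12_reach3 _ _ h3
  subst this
  rw [S12_fix3] at h2
  exact absurd h2 (by decide)

lemma Jus32_empty : Jus S12 3 2 = ∅ := by
  ext p
  simp only [Jus, Set.mem_setOf_eq, Set.mem_empty_iff_false, iff_false, not_exists]
  rintro o ⟨h3, h2⟩
  have := S12_reach3 _ _ h3
  subst this
  rw [S12_fix3] at h2
  exact absurd h2 (by decide)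

lemma Jus13_empty : Jus S12 1 3 = ∅ := by
  ext p
  simp only [Jus, Set.mem_setOf_eq, Set.mem_empty_iff_false, iff_false, not_exists]
  rintro o ⟨h1, h3⟩
  have e1 := S12_reach1 _ _ h1
  have e3 := S12_reach3 _ _ h3
  rw [e1] at e3
  exact absurd e3 (by decide)

theorem central_permutation_fails :
    AP S12 0 1 2 3 ∧ ¬ AP S12 0 2 1 3 := by
  constructor
  · refine ⟨?_, ?_, ?_, ?_⟩
    · left
      intro p hp
      rcases hp with h | h
      · rw [Jus01_empty] at h; exact absurd h (Set.notMem_empty p)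
      · rw [Jus23_empty] at h; exact absurd h (Set.notMem_empty p)
    · left
      intro p hp
      rcases hp with h | h
      · rw [Jus10_empty] at h; exact absurd h (Set.notMem_empty p)
      · rw [Jus32_empty] at h; exact absurd h (Set.notMem_empty p)
    · left
      intro p hp
      rcases hp with h | h
      · rw [Jus23_empty] at h; exact absurd h (Set.notMem_empty p)
      · rw [Jus01_empty] at h; exact absurd h (Set.notMem_empty p)
    · left
      intro p hp
      rcases hp with h | h
      · rw [Jus32_empty] at h; exact absurd h (Set.notMem_empty p)
      · rw [Jus10_empty] at h; exact absurd h (Set.notMem_empty p)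
  · rintro ⟨h, -⟩
    rcases h with h | ⟨⟨q, hq⟩, -⟩
    · have hmem : ((0, 1) : ℕ × ℕ) ∈ Jus S12 0 2 := ⟨0, rfl, rfl⟩
      have := h (0, 1) (Or.inl hmem)
      simp at this
    · rw [Jus13_empty] at hq
      exact hq.2
end

section
/- There is a monounary algebra in which strong inner reflexivity fails: in the algebra A = {a, c, d} with S(a) = a, S(c) = d, S(d) = c, the proportion a : a :: c : d holds even though c ≠ d. -/
/-- The algebra {a, c, d} = {0, 1, 2} with S(a) = a, S(c) = d, S(d) = c. -/
def S13 : Fin 3 → Fin 3 := fun x => if x = 0 then 0 else if x = 1 then 2 else 1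

lemma it0 (k : ℕ) : S13^[k] 0 = 0 := by
  induction k with
  | zero => rfl
  | succ n ih => rw [Function.iterate_succ_apply', ih]; rfl

lemma it12 (k : ℕ) : S13^[k] 1 = (if Even k then 1 else 2) ∧
    S13^[k] 2 = (if Even k then 2 else 1) := by
  induction k with
  | zero => simp
  | succ n ih =>
    rw [Function.iterate_succ_apply', Function.iterate_succ_apply', ih.1, ih.2]
    by_cases h : Even n <;> simp [h, Nat.even_add_one, S13]

lemma mem_jus_iff (k l : ℕ) (x y : Fin 3) : (k, l) ∈ Jus S13 x y ↔
    (((0 : Fin 3) = x ∧ (0 : Fin 3) = y) ∨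
     ((if Even k then (1 : Fin 3) else 2) = x ∧ (if Even l then (1 : Fin 3) else 2) = y) ∨
     ((if Even k then (2 : Fin 3) else 1) = x ∧ (if Even l then (2 : Fin 3) else 1) = y)) := by
  constructor
  · rintro ⟨o, h1, h2⟩
    have ho : ∀ z : Fin 3, z = 0 ∨ z = 1 ∨ z = 2 := by decide
    rcases ho o with h | h | h <;> subst h
    · rw [it0] at h1 h2; exact Or.inl ⟨h1, h2⟩
    · rw [(it12 k).1] at h1; rw [(it12 l).1] at h2; exact Or.inr (Or.inl ⟨h1, h2⟩)
    · rw [(it12 k).2] at h1; rw [(it12 l).2] at h2; exact Or.inr (Or.inr ⟨h1, h2⟩)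
  · rintro (⟨h1, h2⟩ | ⟨h1, h2⟩ | ⟨h1, h2⟩)
    · exact ⟨0, by rw [it0]; exact h1, by rw [it0]; exact h2⟩
    · exact ⟨1, by rw [(it12 k).1]; exact h1, by rw [(it12 l).1]; exact h2⟩
    · exact ⟨2, by rw [(it12 k).2]; exact h1, by rw [(it12 l).2]; exact h2⟩

lemma mem00 (k l : ℕ) : (k, l) ∈ Jus S13 0 0 := ⟨0, it0 k, it0 l⟩

lemma h01_12 : ((0 : ℕ), (1 : ℕ)) ∈ Jus S13 0 0 ∩ Jus S13 1 2 :=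
  ⟨mem00 0 1, (mem_jus_iff 0 1 1 2).mpr (by decide)⟩

lemma h01_21 : ((0 : ℕ), (1 : ℕ)) ∈ Jus S13 0 0 ∩ Jus S13 2 1 :=
  ⟨mem00 0 1, (mem_jus_iff 0 1 2 1).mpr (by decide)⟩

lemma not_mem_y0 {x : Fin 3} (hx : x ≠ 0) (k l : ℕ) : (k, l) ∉ Jus S13 x 0 := by
  rw [mem_jus_iff]
  by_cases hk : Even k <;> by_cases hl : Even l <;> simp [hk, hl] <;>
    exact fun h => hx h.symm

lemma not_mem_0y {y : Fin 3} (hy : y ≠ 0) (k l : ℕ) : (k, l) ∉ Jus S13 0 y := by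
  rw [mem_jus_iff]
  by_cases hk : Even k <;> by_cases hl : Even l <;> simp [hk, hl] <;>
    exact fun h => hy h.symm

theorem strong_inner_reflexivity_fails :
    AP S13 0 0 1 2 ∧ (1 : Fin 3) ≠ 2 := by
  refine ⟨⟨?_, ?_, ?_, ?_⟩, by decide⟩
  · -- ArrowP S13 0 0 1 2
    right
    refine ⟨⟨(0, 1), h01_12⟩, ?_⟩
    intro v' h p hp
    refine ⟨hp.1, ?_⟩
    obtain ⟨k, l⟩ := p
    fin_cases v'
    · exact absurd hp.2 (not_mem_y0 (by decide) k l)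
    · have := (h h01_12).2
      rw [mem_jus_iff] at this
      exact absurd this (by decide)
    · exact hp.2
  · -- ArrowP S13 0 0 2 1
    right
    refine ⟨⟨(0, 1), h01_21⟩, ?_⟩
    intro v' h p hp
    refine ⟨hp.1, ?_⟩
    obtain ⟨k, l⟩ := p
    fin_cases v'
    · exact absurd hp.2 (not_mem_y0 (by decide) k l)
    · exact hp.2
    · have := (h h01_21).2
      rw [mem_jus_iff] at this
      exact absurd this (by decide)
  · -- ArrowP S13 1 2 0 0
    right
    refine ⟨⟨(0, 1), h01_12.2, mem00 0 1⟩, ?_⟩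
    intro v' h p hp
    exact ⟨hp.1, mem00 p.1 p.2⟩
  · -- ArrowP S13 2 1 0 0
    right
    refine ⟨⟨(0, 1), h01_21.2, mem00 0 1⟩, ?_⟩
    intro v' h p hp
    exact ⟨hp.1, mem00 p.1 p.2⟩
end

section
/- There is a monounary algebra in which strong reflexivity fails: in the algebra A = {a, b, d} with S(a) = a, S(b) = b, S(d) = d (all loops), the proportion a : b :: a : d holds even though a ≠ b and b ≠ d. -/
lemma jus_id_empty {A : Type*} {x y : A} (h : x ≠ y) : Jus (id : A → A) x y = ∅ := by
  ext p
  simp only [Jus, Set.mem_setOf_eq, Function.iterate_id, id_eq, Set.mem_empty_iff_false,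
    iff_false]
  rintro ⟨o, rfl, rfl⟩
  exact h rfl

lemma arrow_id {A : Type*} {x y u v : A} (hxy : x ≠ y) (huv : u ≠ v) :
    ArrowP (id : A → A) x y u v := by
  left
  intro p hp
  rw [jus_id_empty hxy, jus_id_empty huv] at hp
  simp at hp

theorem strong_reflexivity_fails :
    AP (id : Fin 3 → Fin 3) 0 1 0 2 ∧ (0 : Fin 3) ≠ 1 ∧ (1 : Fin 3) ≠ 2 := by
  refine ⟨⟨arrow_id ?_ ?_, arrow_id ?_ ?_, arrow_id ?_ ?_, arrow_id ?_ ?_⟩, ?_, ?_⟩ <;> decide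
end
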